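/- arXiv:2512.21417 — 2 statements merged into one kernel-verified Lean document; each statement's English description precedes it below -/
import Mathlib

section
/- Let X be a random vector in ℝ² satisfying the Carleman condition. If the set 𝒰 = {u ∈ S¹ : X =_d R_u X} of directions of axial symmetry of X is infinite, then the distribution of X is spherically symmetric. -/
open MeasureTheory
open scoped RealInnerProductSpace

/-- The reflection `R_u x = 2 ⟪u, x⟫ u - x` across the line spanned by the unit vector `u`. -/
noncomputable def reflMap {d : ℕ} (u : EuclideanSpace ℝ (Fin d)) (x : EuclideanSpace ℝ (Fin d)) :
    EuclideanSpace ℝ (Fin d) :=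
  (2 * ⟪u, x⟫) • u - x

/-- Carleman condition for a random vector. -/
def Carleman {d : ℕ} {Ω : Type*} [MeasurableSpace Ω] (μ : Measure Ω)
    (X : Ω → EuclideanSpace ℝ (Fin d)) : Prop :=
  (∀ k : ℕ, Integrable (fun ω => ‖X ω‖ ^ k) μ) ∧
    ¬ Summable (fun k : ℕ => (∫ ω, ‖X ω‖ ^ (k + 1) ∂μ) ^ (-1 / ((k : ℝ) + 1)))

/-- Spherical symmetry: `Q X =_d X` for every orthogonal transformation `Q`. -/
def SphericallySymmetric {d : ℕ} {Ω : Type*} [MeasurableSpace Ω] (μ : Measure Ω)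
    (X : Ω → EuclideanSpace ℝ (Fin d)) : Prop :=
  ∀ Q : EuclideanSpace ℝ (Fin d) ≃ₗᵢ[ℝ] EuclideanSpace ℝ (Fin d),
    Measure.map (fun ω => Q (X ω)) μ = Measure.map X μ

/-!
Transport the law of `X` to a finite measure `ν` on `ℂ` and look at the group `H` of linear
isometries of `ℂ` preserving `ν`. The reflection in the line through a unit complex number
`a` is `z ↦ a² z̄`, so two reflections in `H` in lines through `a` and `b` yield the rotation by
`a² / b²`; since squaring is finite-to-one on the circle, infinitely many axes give infinitely
many rotations in `H`. These rotations form a closed subgroup of the circle (invariance of a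
finite measure passes to limits), and an infinite closed subgroup of the circle is everything.
Composing one reflection with a rotation then puts complex conjugation in `H` too, and every
linear isometry of `ℂ` is a rotation, possibly composed with conjugation.
-/

open Submodule ComplexConjugate
open scoped BoundedContinuousFunction

namespace MeasureTheory.Measure

theorem isClosed_setOf_map_eq {G α : Type*} [TopologicalSpace G] [FirstCountableTopology G]
    [TopologicalSpace α] [HasOuterApproxClosed α] [MeasurableSpace α] [BorelSpace α]
    (ν : Measure α) [IsFiniteMeasure ν] {φ : G → α → α} (hφ : Continuous (Function.uncurry φ)) :
    IsClosed {g | ν.map (φ g) = ν} := by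
  have hφg (g : G) : Continuous (φ g) := hφ.comp (Continuous.prodMk_right g)
  have hset : {g | ν.map (φ g) = ν} = ⋂ f : α →ᵇ ℝ, {g | ∫ x, f (φ g x) ∂ν = ∫ x, f x ∂ν} := by
    ext g
    simp only [Set.mem_ofPred_eq, Set.mem_iInter]
    constructor
    · intro hg f
      rw [← integral_map (hφg g).measurable.aemeasurable f.continuous.aestronglyMeasurable, hg]
    · intro hg
      refine ext_of_forall_integral_eq_of_IsFiniteMeasure fun f => ?_
      rw [integral_map (hφg g).measurable.aemeasurable f.continuous.aestronglyMeasurable, hg f]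
  rw [hset]
  refine isClosed_iInter fun f => isClosed_eq ?_ continuous_const
  exact continuous_of_dominated (bound := fun _ => ‖f‖)
    (fun g => (f.continuous.comp (hφg g)).aestronglyMeasurable)
    (fun g => ae_of_all _ fun x => f.norm_coe_le_norm _) (integrable_const _)
    (ae_of_all _ fun x => f.continuous.comp (hφ.comp (Continuous.prodMk_left x)))

variable {E F : Type*} [NormedAddCommGroup E] [NormedSpace ℝ E] [MeasurableSpace E] [BorelSpace E]
  [NormedAddCommGroup F] [NormedSpace ℝ F] [MeasurableSpace F] [BorelSpace F]

def isometryStabilizer (ν : Measure E) : Subgroup (E ≃ₗᵢ[ℝ] E) where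
  carrier := {f | ν.map f = ν}
  one_mem' := by simp
  mul_mem' {f g} hf hg := by
    simp only [Set.mem_ofPred_eq, LinearIsometryEquiv.coe_mul] at *
    rw [← map_map f.continuous.measurable g.continuous.measurable, hg, hf]
  inv_mem' {f} hf := by
    simp only [Set.mem_ofPred_eq] at *
    conv_lhs => rw [← hf]
    rw [map_map f⁻¹.continuous.measurable f.continuous.measurable, ← LinearIsometryEquiv.coe_mul,
      inv_mul_cancel, LinearIsometryEquiv.coe_one, map_id]

theorem mem_isometryStabilizer {ν : Measure E} {f : E ≃ₗᵢ[ℝ] E} :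
    f ∈ ν.isometryStabilizer ↔ ν.map f = ν := Iff.rfl

theorem mem_isometryStabilizer_map_iff (e : E ≃ₗᵢ[ℝ] F) (ν : Measure E) (f : E ≃ₗᵢ[ℝ] E) :
    e.symm.trans (f.trans e) ∈ (ν.map e).isometryStabilizer ↔ f ∈ ν.isometryStabilizer := by
  have he := e.continuous.measurable
  rw [mem_isometryStabilizer, mem_isometryStabilizer,
    map_map (e.symm.trans (f.trans e)).continuous.measurable he]
  have : ⇑(e.symm.trans (f.trans e)) ∘ ⇑e = ⇑e ∘ ⇑f := by ext x; simp
  rw [this, ← map_map he f.continuous.measurable]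
  exact e.toHomeomorph.measurableEmbedding.map_injective.eq_iff

end MeasureTheory.Measure

theorem Circle.finite_setOf_pow_eq {n : ℕ} (hn : n ≠ 0) (c : Circle) :
    {a : Circle | a ^ n = c}.Finite := by
  refine ((Polynomial.nthRoots n (c : ℂ)).toFinset.finite_toSet.preimage
    Circle.coe_injective.injOn).subset fun a (ha : a ^ n = c) => ?_
  simp [Polynomial.mem_nthRoots (Nat.pos_of_ne_zero hn), ← ha]

theorem Circle.subgroup_eq_top_of_isClosed_of_infinite {S : Subgroup Circle}
    (hclosed : IsClosed (S : Set Circle)) (hinf : (S : Set Circle).Infinite) : S = ⊤ := by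
  let φ := AddCircle.homeomorphCircle (one_ne_zero (α := ℝ))
  have hφ (x : UnitAddCircle) : φ x = AddCircle.toCircle x := AddCircle.homeomorphCircle_apply _ x
  let T : AddSubgroup UnitAddCircle :=
    { carrier := φ ⁻¹' S
      zero_mem' := by simp [hφ, S.one_mem]
      add_mem' := fun hx hy => by simpa [hφ, AddCircle.toCircle_add] using S.mul_mem hx hy
      neg_mem' := fun hx => by simpa [hφ, AddCircle.toCircle_neg] using S.inv_mem hx }
  have hT (x : UnitAddCircle) : x ∈ T ↔ φ x ∈ S := Iff.rfl
  have hT_closed : IsClosed (T : Set UnitAddCircle) := hclosed.preimage φ.continuous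
  have hT_dense : Dense (T : Set UnitAddCircle) := by
    refine AddCircle.dense_addSubgroup_iff_ne_zmultiples.2 fun x hx hTx => hinf ?_
    have hT_fin : (T : Set UnitAddCircle).Finite :=
      hTx ▸ (addOrderOf_ne_zero_iff.1 hx).finite_zmultiples
    exact (hT_fin.image φ).subset fun a ha => ⟨φ.symm a, by simpa [hT] using ha, by simp⟩
  rw [eq_top_iff]
  intro a _
  have : φ.symm a ∈ T := by
    rw [← SetLike.mem_coe, ← hT_closed.closure_eq, hT_dense.closure_eq]
    trivial
  simpa [hT] using this

namespace Complex

theorem reflection_span_circle (a : Circle) :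
    reflection (ℝ ∙ (a : ℂ)) = rotation (a ^ 2) * conjLIE := by
  have ha : conj (a : ℂ) * a = 1 := by
    rw [← Circle.coe_inv_eq_conj, ← Circle.coe_mul, inv_mul_cancel, Circle.coe_one]
  ext z
  rw [reflection_singleton_apply, Circle.norm_coe, Complex.inner]
  simp only [RCLike.ofReal_one, one_pow, div_one, two_smul, Complex.real_smul, re_eq_add_conj,
    map_mul, conj_conj, LinearIsometryEquiv.coe_mul, Function.comp_apply, conjLIE_apply,
    rotation_apply, Circle.coe_pow]
  linear_combination z * ha

theorem isClosed_comap_rotation_isometryStabilizer (ν : Measure ℂ) [IsFiniteMeasure ν] :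
    IsClosed ((ν.isometryStabilizer.comap rotation : Subgroup Circle) : Set Circle) :=
  ν.isClosed_setOf_map_eq (φ := fun (a : Circle) z => (a : ℂ) * z) (by fun_prop)

theorem isometryStabilizer_eq_top_of_infinite_reflections {ν : Measure ℂ} [IsFiniteMeasure ν]
    (h : {a : Circle | reflection (ℝ ∙ (a : ℂ)) ∈ ν.isometryStabilizer}.Infinite) :
    ν.isometryStabilizer = ⊤ := by
  set H := ν.isometryStabilizer
  set S : Subgroup Circle := H.comap rotation
  obtain ⟨b, hb⟩ := h.nonempty
  have hquot {a : Circle} (ha : reflection (ℝ ∙ (a : ℂ)) ∈ H) : a ^ 2 / b ^ 2 ∈ S := by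
    have hprod : reflection (ℝ ∙ (a : ℂ)) * (reflection (ℝ ∙ (b : ℂ)))⁻¹ =
        rotation (a ^ 2 / b ^ 2) := by
      rw [reflection_span_circle, reflection_span_circle, map_div, div_eq_mul_inv]
      group
    exact Subgroup.mem_comap.2 (hprod ▸ H.mul_mem ha (H.inv_mem hb))
  have hS_inf : (S : Set Circle).Infinite := by
    intro hS_fin
    refine h (Set.Finite.subset ?_ fun a ha => hquot ha)
    refine hS_fin.preimage' fun c _ => ?_
    exact (Circle.finite_setOf_pow_eq two_ne_zero (c * b ^ 2)).subset
      fun a (ha : a ^ 2 / b ^ 2 = c) => div_eq_iff_eq_mul.1 ha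
  have hS : S = ⊤ := Circle.subgroup_eq_top_of_isClosed_of_infinite
    (isClosed_comap_rotation_isometryStabilizer ν) hS_inf
  have hrot (a : Circle) : rotation a ∈ H := (Subgroup.eq_top_iff' S).1 hS a
  have hconj : conjLIE ∈ H := by
    have := H.mul_mem (H.inv_mem (hrot (b ^ 2))) hb
    rwa [reflection_span_circle, inv_mul_cancel_left] at this
  refine eq_top_iff.2 fun f _ => ?_
  obtain ⟨a, rfl | rfl⟩ := linear_isometry_complex f
  · exact hrot a
  · exact H.mul_mem (hrot a) hconj

end Complex

theorem reflMap_eq_reflection {d : ℕ} {u : EuclideanSpace ℝ (Fin d)} (hu : ‖u‖ = 1) :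
    reflMap u = reflection (ℝ ∙ u) := by
  ext x : 1
  rw [reflection_singleton_apply, hu]
  simp [reflMap, two_smul, mul_smul]

theorem infinite_axes_spherical_general {Ω : Type*} [MeasurableSpace Ω]
    (μ : Measure Ω) [IsProbabilityMeasure μ]
    (X : Ω → EuclideanSpace ℝ (Fin 2)) (hX : Measurable X)
    (hinf : {u : EuclideanSpace ℝ (Fin 2) | ‖u‖ = 1 ∧
      Measure.map X μ = Measure.map (fun ω => reflMap u (X ω)) μ}.Infinite) :
    SphericallySymmetric μ X := by
  set e : EuclideanSpace ℝ (Fin 2) ≃ₗᵢ[ℝ] ℂ := Complex.orthonormalBasisOneI.repr.symm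
  set ν := (μ.map X).map e
  have hmap (f : EuclideanSpace ℝ (Fin 2) ≃ₗᵢ[ℝ] EuclideanSpace ℝ (Fin 2)) :
      μ.map (fun ω => f (X ω)) = (μ.map X).map f :=
    (Measure.map_map f.continuous.measurable hX).symm
  have haxes : {a : Circle | reflection (ℝ ∙ (a : ℂ)) ∈ ν.isometryStabilizer}.Infinite := by
    refine Set.Infinite.of_image (↑) ((hinf.image e.injective.injOn).mono ?_)
    rintro - ⟨u, ⟨hu, hsymm⟩, rfl⟩
    refine ⟨⟨e u, mem_sphere_zero_iff_norm.2 (by rw [e.norm_map, hu])⟩, ?_, rfl⟩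
    have hreflection : reflection (ℝ ∙ e u) = e.symm.trans ((reflection (ℝ ∙ u)).trans e) := by
      rw [← reflection_map]
      congr 1
      rw [map_span, Set.image_singleton]
      rfl
    show reflection (ℝ ∙ e u) ∈ ν.isometryStabilizer
    rw [hreflection, Measure.mem_isometryStabilizer_map_iff,
      Measure.mem_isometryStabilizer, ← hmap, ← reflMap_eq_reflection hu, hsymm]
  have htop := Complex.isometryStabilizer_eq_top_of_infinite_reflections haxes
  intro Q
  rw [hmap, ← Measure.mem_isometryStabilizer, ← Measure.mem_isometryStabilizer_map_iff e, htop]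
  exact Subgroup.mem_top _

/-- if `X` in `ℝ²` satisfies the Carleman condition and has infinitely many
directions of axial symmetry, then `X` is spherically symmetric. -/
theorem infinite_axes_spherical {Ω : Type*} [MeasurableSpace Ω]
    (μ : Measure Ω) [IsProbabilityMeasure μ]
    (X : Ω → EuclideanSpace ℝ (Fin 2)) (hX : Measurable X) (hC : Carleman μ X)
    (hinf : {u : EuclideanSpace ℝ (Fin 2) | ‖u‖ = 1 ∧
      Measure.map X μ = Measure.map (fun ω => reflMap u (X ω)) μ}.Infinite) :
    SphericallySymmetric μ X :=
  infinite_axes_spherical_general μ X hX hinf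
end

section
/- Let P be an absolutely continuous probability distribution on ℝ^d (with respect to Lebesgue measure), let X have distribution P, and fix finitely many directions h₁, …, h_k ∈ S^{d−1}. Then the function g : S^{d−1} → ℝ defined by g(u) = (1/k) Σ_{j=1}^k sup_{t∈ℝ} |F_{⟨X,h_j⟩}(t) − F_{⟨R_uX,h_j⟩}(t)| is continuous on S^{d−1}. -/
/-!
Since `⟪R_u x, h⟫ = ⟪x, R_u h⟫`, `g(u)` is the average of `Φ_j (R_u h_j)`, where
`Φ_j v = sup_t |F_{h_j}(t) - F_v(t)|` and `F_v` is the cdf of `⟪X, v⟫`. As `R_u` is an involution,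
`R_u h_j ≠ 0`, so it suffices that `v ↦ F_v` is continuous for uniform convergence at every `v ≠ 0`.
On the ball `‖x‖ ≤ R`, and for `R ‖w - v‖ ≤ δ`, the events `⟪x, w⟫ ≤ t` and `⟪x, v⟫ ≤ t` differ only
on the slab `|⟪x, v⟫ - t| ≤ δ`. The law of `⟪X, v⟫` is absolutely continuous on `ℝ` (the image of
Lebesgue measure under a surjective linear map is a multiple of Lebesgue measure), so the slab has
small mass uniformly in `t`, and the complement of the ball has small mass by tightness.
-/

open MeasureTheory
open scoped RealInnerProductSpace

/-- The population quantity
`g(u) = (1/k) Σ_j sup_t |F_{⟨X,h_j⟩}(t) − F_{⟨R_uX,h_j⟩}(t)|` for `X ~ P`. -/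
noncomputable def popG {d k : ℕ} (P : Measure (EuclideanSpace ℝ (Fin d)))
    (h : Fin k → EuclideanSpace ℝ (Fin d)) (u : EuclideanSpace ℝ (Fin d)) : ℝ :=
  (1 / (k : ℝ)) * ∑ j, ⨆ t : ℝ,
    |(P {x | ⟪x, h j⟫ ≤ t}).toReal - (P {x | ⟪reflMap u x, h j⟫ ≤ t}).toReal|

open Filter Set Topology Metric
open scoped ENNReal symmDiff

theorem MeasureTheory.Measure.AbsolutelyContinuous.exists_pos_forall_measure_lt
    {α : Type*} [MeasurableSpace α] {ν μ : Measure α} [IsFiniteMeasure ν] [SFinite μ]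
    [ν.HaveLebesgueDecomposition μ] (h : ν ≪ μ) {ε : ℝ≥0∞} (hε : ε ≠ 0) :
    ∃ δ > 0, ∀ s, μ s < δ → ν s < ε := by
  obtain ⟨δ, hδ, hs⟩ := exists_pos_setLIntegral_lt_of_measure_lt
    (Measure.lintegral_rnDeriv_lt_top ν μ).ne hε
  refine ⟨δ, hδ, fun s hs' => ?_⟩
  rw [← Measure.withDensity_rnDeriv_eq ν μ h, withDensity_apply']
  exact hs s hs'

theorem MeasureTheory.Measure.AbsolutelyContinuous.map_linearMap {E F : Type*}
    [NormedAddCommGroup E] [NormedSpace ℝ E] [MeasurableSpace E] [BorelSpace E]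
    [FiniteDimensional ℝ E] [NormedAddCommGroup F] [NormedSpace ℝ F] [MeasurableSpace F]
    [BorelSpace F] {P μ : Measure E} [μ.IsAddHaarMeasure] (ν : Measure F) [ν.IsAddHaarMeasure]
    (hP : P ≪ μ) {L : E →ₗ[ℝ] F} (hL : Function.Surjective L) : P.map L ≪ ν := by
  obtain ⟨c, -, hc⟩ := L.exists_map_addHaar_eq_smul_addHaar μ ν hL
  exact (hP.map L.continuous_of_finiteDimensional.measurable).trans
    (hc ▸ Measure.smul_absolutelyContinuous)

theorem exists_pos_forall_measureReal_Icc_lt {ν : Measure ℝ} [IsFiniteMeasure ν] (hν : ν ≪ volume)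
    {ε : ℝ} (hε : 0 < ε) : ∃ δ > 0, ∀ t, ν.real (Icc (t - δ) (t + δ)) < ε := by
  obtain ⟨η, hη, hνη⟩ := hν.exists_pos_forall_measure_lt (ENNReal.ofReal_pos.2 hε).ne'
  obtain ⟨r, -, hr, hrη⟩ := ENNReal.lt_iff_exists_real_btwn.1 hη
  refine ⟨r / 2, by simpa using hr, fun t => ENNReal.toReal_lt_of_lt_ofReal (hνη _ ?_)⟩
  rwa [Real.volume_Icc, show t + r / 2 - (t - r / 2) = r by ring]

theorem exists_pos_measureReal_compl_closedBall_lt {E : Type*} [NormedAddCommGroup E]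
    [NormedSpace ℝ E] [FiniteDimensional ℝ E] [MeasurableSpace E] [BorelSpace E]
    (P : Measure E) [IsFiniteMeasure P] {ε : ℝ} (hε : 0 < ε) :
    ∃ R > 0, P.real (closedBall 0 R)ᶜ < ε := by
  have htail := tendsto_measure_compl_closedBall_of_isTightMeasureSet
    (isTightMeasureSet_singleton (μ := P)) 0
  simp only [mem_singleton_iff, iSup_iSup_eq_left] at htail
  obtain ⟨R, hPR, hR⟩ := ((htail.eventually (gt_mem_nhds (ENNReal.ofReal_pos.2 hε))).and
    (eventually_gt_atTop 0)).exists
  exact ⟨R, hR, ENNReal.toReal_lt_of_lt_ofReal hPR⟩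

section ProjCDF

variable {E : Type*} [NormedAddCommGroup E] [InnerProductSpace ℝ E]

noncomputable def projCDF [MeasurableSpace E] (P : Measure E) (v : E) (t : ℝ) : ℝ :=
  P.real {x | ⟪x, v⟫ ≤ t}

theorem symmDiff_setOf_inner_le_subset {v w : E} {R δ : ℝ} (hR : R * ‖w - v‖ ≤ δ) (t : ℝ) :
    {x : E | ⟪x, w⟫ ≤ t} ∆ {x | ⟪x, v⟫ ≤ t} ⊆
      (fun x => ⟪x, v⟫) ⁻¹' Icc (t - δ) (t + δ) ∪ (closedBall 0 R)ᶜ := by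
  intro x hx
  by_cases hxR : x ∈ closedBall 0 R
  · left
    have hclose : |⟪x, w⟫ - ⟪x, v⟫| ≤ δ := by
      rw [← inner_sub_right]
      calc |⟪x, w - v⟫| ≤ ‖x‖ * ‖w - v‖ := abs_real_inner_le_norm x (w - v)
        _ ≤ R * ‖w - v‖ := by gcongr; simpa using hxR
        _ ≤ δ := hR
    rw [abs_le] at hclose
    rw [mem_symmDiff] at hx
    simp only [mem_ofPred_eq, not_le] at hx
    simp only [mem_preimage, mem_Icc]
    constructor <;> rcases hx with hx | hx <;> linarith [hx.1, hx.2]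
  · exact Or.inr hxR

variable [MeasurableSpace E]

theorem bddAbove_range_abs_projCDF_sub (P : Measure E) [IsFiniteMeasure P] (v w : E) :
    BddAbove (range fun t => |projCDF P v t - projCDF P w t|) :=
  ⟨P.real univ, by
    rintro _ ⟨t, rfl⟩
    exact abs_sub_le_of_nonneg_of_le measureReal_nonneg (measureReal_mono (subset_univ _))
      measureReal_nonneg (measureReal_mono (subset_univ _))⟩

variable [BorelSpace E]

theorem abs_projCDF_sub_le (P : Measure E) [IsFiniteMeasure P] {v w : E} {R δ : ℝ}
    (hR : R * ‖w - v‖ ≤ δ) (t : ℝ) :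
    |projCDF P w t - projCDF P v t| ≤
      (P.map fun x => ⟪x, v⟫).real (Icc (t - δ) (t + δ)) + P.real (closedBall 0 R)ᶜ := by
  have hmeas : ∀ u : E, Measurable fun x : E => ⟪x, u⟫ := fun u =>
    (continuous_id.inner continuous_const).measurable
  rw [map_measureReal_apply (hmeas v) measurableSet_Icc]
  calc |projCDF P w t - projCDF P v t|
      ≤ P.real ({x : E | ⟪x, w⟫ ≤ t} ∆ {x | ⟪x, v⟫ ≤ t}) :=
        abs_measureReal_sub_le_measureReal_symmDiff
          (measurableSet_le (hmeas w) measurable_const).nullMeasurableSet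
          (measurableSet_le (hmeas v) measurable_const).nullMeasurableSet
    _ ≤ _ := (measureReal_mono (symmDiff_setOf_inner_le_subset hR t)).trans
        (measureReal_union_le _ _)

theorem tendstoUniformly_projCDF [FiniteDimensional ℝ E] {μ : Measure E} [μ.IsAddHaarMeasure]
    {P : Measure E} [IsFiniteMeasure P] (hP : P ≪ μ) {v : E} (hv : v ≠ 0) :
    TendstoUniformly (fun w => projCDF P w) (projCDF P v) (𝓝 v) := by
  have hsurj : Function.Surjective ((innerₗ E).flip v) :=
    ((innerₗ E).flip v).surjective_or_eq_zero.resolve_right fun h0 =>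
      hv (inner_self_eq_zero.1 (LinearMap.congr_fun h0 v))
  have hν : P.map (fun x => ⟪x, v⟫) ≪ volume := hP.map_linearMap volume hsurj
  rw [Metric.tendstoUniformly_iff]
  intro ε hε
  obtain ⟨δ, hδ, hslab⟩ := exists_pos_forall_measureReal_Icc_lt hν (half_pos hε)
  obtain ⟨R, hR, htail⟩ := exists_pos_measureReal_compl_closedBall_lt P (half_pos hε)
  filter_upwards [ball_mem_nhds v (div_pos hδ hR)] with w hw t
  have hRw : R * ‖w - v‖ ≤ δ := by
    rw [mem_ball, dist_eq_norm, lt_div_iff₀' hR] at hw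
    exact hw.le
  rw [dist_comm, Real.dist_eq]
  linarith [abs_projCDF_sub_le P hRw t, hslab t]

end ProjCDF

theorem ciSup_abs_le_ciSup_abs_add {α : Type*} [Nonempty α] {f g : α → ℝ}
    (hf : BddAbove (range fun t => |f t|)) {c : ℝ} (h : ∀ t, |g t - f t| ≤ c) :
    ⨆ t, |g t| ≤ (⨆ t, |f t|) + c :=
  ciSup_le fun t =>
    calc |g t| ≤ |f t| + |g t - f t| := by linarith [abs_sub_abs_le_abs_sub (g t) (f t)]
      _ ≤ (⨆ t, |f t|) + c := add_le_add (le_ciSup hf t) (h t)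

theorem continuousAt_iSup_abs_sub_of_tendstoUniformly {X α : Type*} [TopologicalSpace X]
    [Nonempty α] {c : α → ℝ} {G : X → α → ℝ} {x₀ : X}
    (hbdd : ∀ x, BddAbove (range fun t => |c t - G x t|))
    (hG : TendstoUniformly G (G x₀) (𝓝 x₀)) :
    ContinuousAt (fun x => ⨆ t, |c t - G x t|) x₀ := by
  rw [ContinuousAt, Metric.tendsto_nhds]
  intro ε hε
  filter_upwards [Metric.tendstoUniformly_iff.1 hG (ε / 2) (half_pos hε)] with x hx
  have hclose : ∀ t, |(c t - G x t) - (c t - G x₀ t)| ≤ ε / 2 := fun t => by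
    rw [sub_sub_sub_cancel_left, ← Real.dist_eq]
    exact (hx t).le
  rw [Real.dist_eq, abs_sub_lt_iff]
  constructor
  · linarith [ciSup_abs_le_ciSup_abs_add (hbdd x₀) hclose]
  · linarith [ciSup_abs_le_ciSup_abs_add (hbdd x) fun t => (abs_sub_comm _ _).trans_le (hclose t)]

section Reflection

variable {d : ℕ}

theorem inner_reflMap_left (u x w : EuclideanSpace ℝ (Fin d)) :
    ⟪reflMap u x, w⟫ = ⟪x, reflMap u w⟫ := by
  simp only [reflMap, inner_sub_left, inner_sub_right, real_inner_smul_left,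
    real_inner_smul_right, real_inner_comm x u]
  ring

theorem reflMap_involutive {u : EuclideanSpace ℝ (Fin d)} (hu : ‖u‖ = 1) :
    Function.Involutive (reflMap u) := by
  intro w
  simp only [reflMap, inner_sub_right, real_inner_smul_right, real_inner_self_eq_norm_sq, hu]
  module

theorem reflMap_ne_zero {u w : EuclideanSpace ℝ (Fin d)} (hu : ‖u‖ = 1) (hw : w ≠ 0) :
    reflMap u w ≠ 0 := fun h0 =>
  hw ((reflMap_involutive hu).injective (h0.trans (by simp [reflMap])))

theorem continuous_reflMap_left (w : EuclideanSpace ℝ (Fin d)) :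
    Continuous fun u => reflMap u w := by
  unfold reflMap
  fun_prop

end Reflection

/-- if `P` is absolutely continuous with respect to Lebesgue measure on `ℝ^d`,
then `g` is continuous on the unit sphere. -/
theorem popG_continuous {d k : ℕ}
    (P : Measure (EuclideanSpace ℝ (Fin d))) [IsProbabilityMeasure P]
    (habs : P ≪ (volume : Measure (EuclideanSpace ℝ (Fin d))))
    (h : Fin k → EuclideanSpace ℝ (Fin d)) (hh : ∀ j, ‖h j‖ = 1) :
    ContinuousOn (popG P h) (Metric.sphere (0 : EuclideanSpace ℝ (Fin d)) 1) := by
  have hpopG : popG P h = fun u => (1 / (k : ℝ)) *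
      ∑ j, ⨆ t, |projCDF P (h j) t - projCDF P (reflMap u (h j)) t| := by
    funext u
    simp only [popG, inner_reflMap_left]
    rfl
  rw [hpopG]
  refine continuousOn_const.mul (continuousOn_finsetSum _ fun j _ u hu => ?_)
  have hv : reflMap u (h j) ≠ 0 :=
    reflMap_ne_zero (by simpa using hu) (norm_ne_zero_iff.1 (by simp [hh j]))
  exact ContinuousAt.comp_continuousWithinAt (f := fun u => reflMap u (h j))
    (continuousAt_iSup_abs_sub_of_tendstoUniformly (bddAbove_range_abs_projCDF_sub P (h j))
      (tendstoUniformly_projCDF habs hv))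
    (continuous_reflMap_left (h j)).continuousWithinAt
end
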